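/- arXiv:1904.03528 — 5 statements merged into one kernel-verified Lean document; each statement's English description precedes it below -/
import Mathlib

section
/- Let (M, τ) be a tracial von Neumann algebra and x ∈ M self-adjoint with ‖x‖ ≤ 1, such that x has no nonzero fixed vectors on L²(M, τ) (equivalently 1 − x is injective). If Σ_{k≥0} (k+1) τ(x²ᵏ) < ∞, then the partial sums ξ_N = Σ_{n=0}^N xⁿ · 1̂ form a Cauchy sequence in L²(M, τ), and its limit ξ satisfies (1−x)ξ = 1̂, i.e. 1 − x has an L² formal inverse. -/
/-!
For self-adjoint `x`, `⟪xⁿ1̂, xᵐ1̂⟫ = τ(x^(n+m))` depends only on `s = n + m`; splitting `s` as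
`⌈s/2⌉ + ⌊s/2⌋` and using that `‖xᵏ1̂‖` decreases in `k` (as `‖x‖ ≤ 1`), its real part is at most
`‖x^⌊(n+m)/2⌋ 1̂‖² = τ(x^(2⌊(n+m)/2⌋))`. A given `k` is `⌊(n+m)/2⌋` for at most `4(k+1)` pairs,
so `‖ξ_N - ξ_M‖² ≤ 4 ∑_{M<k≤N} (k+1) τ(x^(2k))`, a block of the convergent series. The same
series forces `xᴺ1̂ → 0`, and `(1 - x) ξ_N = 1̂ - x^(N+1) 1̂` gives `(1 - x) ξ = 1̂` in the limit.
-/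

open scoped InnerProductSpace

/-- A tracial von Neumann algebra `(M, τ)`, presented concretely: a von Neumann
algebra `M` acting on the Hilbert space `H = L²(M, τ)` together with the cyclic,
separating, tracial unit vector `Ω = 1̂`; the trace is `τ(a) = ⟪aΩ, Ω⟫`. -/
structure TracialVonNeumannAlgebra (H : Type*) [NormedAddCommGroup H]
    [InnerProductSpace ℂ H] [CompleteSpace H] where
  M : VonNeumannAlgebra H
  Ω : H
  norm_Ω : ‖Ω‖ = 1
  tracial : ∀ a b : H →L[ℂ] H, a ∈ M → b ∈ M →
    (inner ℂ ((a * b) Ω) Ω : ℂ) = (inner ℂ ((b * a) Ω) Ω : ℂ)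
  separating : ∀ a : H →L[ℂ] H, a ∈ M → a Ω = 0 → a = 0
  cyclic : Dense {ξ : H | ∃ a ∈ M, a Ω = ξ}

/-- The trace `τ(a) = ⟪aΩ, Ω⟫`. -/
noncomputable def TracialVonNeumannAlgebra.τ {H : Type*} [NormedAddCommGroup H]
    [InnerProductSpace ℂ H] [CompleteSpace H]
    (T : TracialVonNeumannAlgebra H) (a : H →L[ℂ] H) : ℂ :=
  inner ℂ (a T.Ω) T.Ω

open Finset Filter Topology

lemma card_filter_add_div_two_eq_le (S : Finset (ℕ × ℕ)) (k : ℕ) :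
    #{p ∈ S | (p.1 + p.2) / 2 = k} ≤ 4 * (k + 1) := by
  -- `p` is determined by `p.1 ≤ 2k + 1` and the parity of `p.1 + p.2 ∈ {2k, 2k + 1}`.
  calc #{p ∈ S | (p.1 + p.2) / 2 = k}
      ≤ #(range (2 * k + 2) ×ˢ range 2) := by
        refine card_le_card_of_injOn (fun p => (p.1, (p.1 + p.2) % 2)) ?_ ?_
        · intro p hp
          simp only [coe_filter, Set.mem_ofPred_eq] at hp
          simp only [coe_product, coe_range, Set.mem_prod, Set.mem_Iio]
          omega
        · intro p hp q hq hpq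
          simp only [coe_filter, Set.mem_ofPred_eq] at hp hq
          simp only [Prod.mk.injEq] at hpq
          ext <;> omega
    _ = 4 * (k + 1) := by simp only [card_product, card_range]; ring

lemma sum_Ico_sum_Ico_div_two_le (a : ℕ → ℝ) (ha : 0 ≤ a) (p q : ℕ) :
    ∑ n ∈ Ico p q, ∑ m ∈ Ico p q, a ((n + m) / 2) ≤
      4 * ∑ k ∈ Ico p q, ((k : ℝ) + 1) * a k := by
  have hmaps : ∀ nm ∈ Ico p q ×ˢ Ico p q, (nm.1 + nm.2) / 2 ∈ Ico p q := by
    intro nm hnm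
    simp only [mem_product, mem_Ico] at hnm ⊢
    omega
  rw [← sum_product', ← sum_fiberwise_of_maps_to hmaps, mul_sum]
  refine sum_le_sum fun k _ => ?_
  calc ∑ nm ∈ Ico p q ×ˢ Ico p q with (nm.1 + nm.2) / 2 = k, a ((nm.1 + nm.2) / 2)
      = #{nm ∈ Ico p q ×ˢ Ico p q | (nm.1 + nm.2) / 2 = k} * a k := by
        rw [sum_congr rfl fun nm hnm => congrArg a (mem_filter.1 hnm).2, sum_const, nsmul_eq_mul]
    _ ≤ (4 * ((k : ℝ) + 1)) * a k := by
        gcongr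
        · exact ha k
        · exact_mod_cast card_filter_add_div_two_eq_le _ k
    _ = 4 * (((k : ℝ) + 1) * a k) := by ring

section Operator

variable {𝕜 E : Type*} [RCLike 𝕜]

lemma tendsto_pow_apply_zero_of_summable [NormedAddCommGroup E] [NormedSpace 𝕜 E]
    {x : E →L[𝕜] E} {v : E} (h : Summable fun k : ℕ => ((k : ℝ) + 1) * ‖(x ^ k) v‖ ^ 2) :
    Tendsto (fun N => (x ^ N) v) atTop (𝓝 0) := by
  have hsq : Tendsto (fun N => ‖(x ^ N) v‖ ^ 2) atTop (𝓝 0) :=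
    squeeze_zero (fun _ => by positivity)
      (fun N => le_mul_of_one_le_left (by positivity) (by simp)) h.tendsto_atTop_zero
  rw [tendsto_zero_iff_norm_tendsto_zero]
  simpa using hsq.sqrt

lemma one_sub_apply_eq_of_tendsto_sum_range_pow_apply [NormedAddCommGroup E] [NormedSpace 𝕜 E]
    {x : E →L[𝕜] E} {v ξ : E} (h0 : Tendsto (fun N => (x ^ N) v) atTop (𝓝 0))
    (hξ : Tendsto (fun N => ∑ n ∈ range N, (x ^ n) v) atTop (𝓝 ξ)) :
    (1 - x) ξ = v := by
  have htele : ∀ N, (1 - x) (∑ n ∈ range N, (x ^ n) v) = v - (x ^ N) v := fun N => by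
    rw [← _root_.sum_apply, ← mul_apply_eq_comp, mul_neg_geom_sum]
    simp
  refine tendsto_nhds_unique (((1 - x).continuous.tendsto ξ).comp hξ) ?_
  simp_rw [Function.comp_def, htele]
  simpa using tendsto_const_nhds.sub h0

variable [NormedAddCommGroup E] [InnerProductSpace 𝕜 E]

lemma antitone_norm_pow_apply {x : E →L[𝕜] E} (hnorm : ‖x‖ ≤ 1) (v : E) :
    Antitone fun k : ℕ => ‖(x ^ k) v‖ := by
  refine antitone_nat_of_succ_le fun k => ?_
  rw [pow_succ', mul_apply_eq_comp]
  exact x.le_of_opNorm_le hnorm _ |>.trans_eq (one_mul _)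

variable [CompleteSpace E] {x : E →L[𝕜] E}

lemma IsSelfAdjoint.inner_pow_apply_pow_apply (hx : IsSelfAdjoint x) (v : E) (n m : ℕ) :
    ⟪(x ^ n) v, (x ^ m) v⟫_𝕜 = ⟪v, (x ^ (n + m)) v⟫_𝕜 := by
  rw [pow_add, mul_apply_eq_comp]
  exact (hx.pow n).isSymmetric _ _

lemma IsSelfAdjoint.re_inner_pow_two_mul_apply_self (hx : IsSelfAdjoint x) (v : E) (k : ℕ) :
    RCLike.re ⟪(x ^ (2 * k)) v, v⟫_𝕜 = ‖(x ^ k) v‖ ^ 2 := by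
  rw [← inner_conj_symm, RCLike.conj_re, two_mul, ← hx.inner_pow_apply_pow_apply,
    inner_self_eq_norm_sq_to_K]
  norm_cast

lemma IsSelfAdjoint.re_inner_pow_apply_pow_apply_le (hx : IsSelfAdjoint x) (hnorm : ‖x‖ ≤ 1)
    (v : E) (n m : ℕ) :
    RCLike.re ⟪(x ^ n) v, (x ^ m) v⟫_𝕜 ≤ ‖(x ^ ((n + m) / 2)) v‖ ^ 2 := by
  set s := n + m
  have hsplit : ⟪(x ^ n) v, (x ^ m) v⟫_𝕜 = ⟪(x ^ (s - s / 2)) v, (x ^ (s / 2)) v⟫_𝕜 := by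
    rw [hx.inner_pow_apply_pow_apply, hx.inner_pow_apply_pow_apply, Nat.sub_add_cancel (by omega)]
  rw [hsplit, sq]
  calc RCLike.re ⟪(x ^ (s - s / 2)) v, (x ^ (s / 2)) v⟫_𝕜
      ≤ ‖(x ^ (s - s / 2)) v‖ * ‖(x ^ (s / 2)) v‖ := re_inner_le_norm _ _
    _ ≤ ‖(x ^ (s / 2)) v‖ * ‖(x ^ (s / 2)) v‖ := by
        gcongr
        exact antitone_norm_pow_apply hnorm v (by omega)

lemma IsSelfAdjoint.norm_sum_Ico_pow_apply_sq_le (hx : IsSelfAdjoint x) (hnorm : ‖x‖ ≤ 1)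
    (v : E) (p q : ℕ) :
    ‖∑ n ∈ Ico p q, (x ^ n) v‖ ^ 2 ≤ 4 * ∑ k ∈ Ico p q, ((k : ℝ) + 1) * ‖(x ^ k) v‖ ^ 2 := by
  calc ‖∑ n ∈ Ico p q, (x ^ n) v‖ ^ 2
      = ∑ n ∈ Ico p q, ∑ m ∈ Ico p q, RCLike.re ⟪(x ^ n) v, (x ^ m) v⟫_𝕜 := by
        rw [← inner_self_eq_norm_sq (𝕜 := 𝕜), sum_inner]
        simp only [inner_sum, map_sum]
    _ ≤ ∑ n ∈ Ico p q, ∑ m ∈ Ico p q, ‖(x ^ ((n + m) / 2)) v‖ ^ 2 :=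
        sum_le_sum fun n _ => sum_le_sum fun m _ => hx.re_inner_pow_apply_pow_apply_le hnorm v n m
    _ ≤ 4 * ∑ k ∈ Ico p q, ((k : ℝ) + 1) * ‖(x ^ k) v‖ ^ 2 :=
        sum_Ico_sum_Ico_div_two_le (fun k => ‖(x ^ k) v‖ ^ 2) (fun k => by positivity) p q

lemma IsSelfAdjoint.cauchySeq_sum_range_pow_apply (hx : IsSelfAdjoint x) (hnorm : ‖x‖ ≤ 1)
    {v : E} (h : Summable fun k : ℕ => ((k : ℝ) + 1) * ‖(x ^ k) v‖ ^ 2) :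
    CauchySeq fun N => ∑ n ∈ range N, (x ^ n) v := by
  rw [Metric.cauchySeq_iff']
  intro ε hε
  obtain ⟨M, hM⟩ :=
    Metric.cauchySeq_iff'.1 h.hasSum.tendsto_sum_nat.cauchySeq (ε ^ 2 / 4) (by positivity)
  refine ⟨M, fun N hN => (pow_lt_pow_iff_left₀ dist_nonneg hε.le two_ne_zero).1 ?_⟩
  have hblock := hx.norm_sum_Ico_pow_apply_sq_le hnorm v M N
  rw [sum_Ico_eq_sub _ hN, sum_Ico_eq_sub _ hN, ← dist_eq_norm] at hblock
  have htail := (abs_lt.1 (Real.dist_eq _ _ ▸ hM N hN)).2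
  linarith

end Operator

theorem partial_sums_cauchy_and_formal_inverse_general
    {H : Type*} [NormedAddCommGroup H] [InnerProductSpace ℂ H] [CompleteSpace H]
    (T : TracialVonNeumannAlgebra H)
    (x : H →L[ℂ] H)
    (hsa : ContinuousLinearMap.adjoint x = x) (hnorm : ‖x‖ ≤ 1)
    (hsum : Summable (fun k : ℕ => ((k : ℝ) + 1) * (T.τ (x ^ (2 * k))).re)) :
    CauchySeq (fun N : ℕ => ∑ n ∈ Finset.range (N + 1), (x ^ n) T.Ω) ∧
    ∃ ξ : H, Filter.Tendsto (fun N : ℕ => ∑ n ∈ Finset.range (N + 1), (x ^ n) T.Ω)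
        Filter.atTop (nhds ξ) ∧ ((1 : H →L[ℂ] H) - x) ξ = T.Ω := by
  have hx : IsSelfAdjoint x := ContinuousLinearMap.isSelfAdjoint_iff'.2 hsa
  have h : Summable fun k : ℕ => ((k : ℝ) + 1) * ‖(x ^ k) T.Ω‖ ^ 2 := by
    simpa only [TracialVonNeumannAlgebra.τ, ← RCLike.re_to_complex,
      hx.re_inner_pow_two_mul_apply_self] using hsum
  obtain ⟨ξ, hξ⟩ := cauchySeq_tendsto_of_complete (hx.cauchySeq_sum_range_pow_apply hnorm h)
  have hξ' := (tendsto_add_atTop_iff_nat 1).2 hξ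
  exact ⟨hξ'.cauchySeq, ξ, hξ',
    one_sub_apply_eq_of_tendsto_sum_range_pow_apply (tendsto_pow_apply_zero_of_summable h) hξ⟩

/-- let `x` be a self-adjoint contraction in a tracial von Neumann
algebra with no nonzero fixed vectors on `L²(M,τ)`. If `Σ_{k≥0} (k+1) τ(x^{2k}) < ∞`,
then the partial sums `ξ_N = Σ_{n=0}^N xⁿ 1̂` form a Cauchy sequence in `L²(M,τ)`,
and the limit `ξ` satisfies `(1 − x) ξ = 1̂`, i.e. `1 − x` has an `L²` formal inverse. -/
theorem partial_sums_cauchy_and_formal_inverse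
    {H : Type*} [NormedAddCommGroup H] [InnerProductSpace ℂ H] [CompleteSpace H]
    (T : TracialVonNeumannAlgebra H)
    (x : H →L[ℂ] H) (hx : x ∈ T.M)
    (hsa : ContinuousLinearMap.adjoint x = x) (hnorm : ‖x‖ ≤ 1)
    (hfix : ∀ ξ : H, x ξ = ξ → ξ = 0)
    (hsum : Summable (fun k : ℕ => ((k : ℝ) + 1) * (T.τ (x ^ (2 * k))).re)) :
    CauchySeq (fun N : ℕ => ∑ n ∈ Finset.range (N + 1), (x ^ n) T.Ω) ∧
    ∃ ξ : H, Filter.Tendsto (fun N : ℕ => ∑ n ∈ Finset.range (N + 1), (x ^ n) T.Ω)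
        Filter.atTop (nhds ξ) ∧ ((1 : H →L[ℂ] H) - x) ξ = T.Ω :=
  partial_sums_cauchy_and_formal_inverse_general T x hsa hnorm hsum
end

section
/- Let G be a countable group, m ≥ 1 and f ∈ ℤ[G] semi-lopsided with f = m − Σ_{s∈S} aₛ s where S is finite, 1 ∉ S, aₛ > 0 and Σₛ aₛ = m. Suppose ξ ∈ c₀(G, ℝ) satisfies ξ * f = δ₁ (ξ is a c₀ formal right inverse). Then for every α ∈ ℤ[G] there exist β, c ∈ ℤ[G] with α = β + c·f and β̂(g) ∈ {−m, …, m−1} for every g ∈ G; moreover β, c can be chosen so that whenever β̂(g) = −m, one has β̂(gs⁻¹) < 0 for every s ∈ S. -/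
/-!
Convolving `ξ` on the left by `α` gives `y = αξ`, again vanishing at infinity, with `y f = α`.
Rounding `y` to the nearest integer gives a finitely supported `c` with `x = y - ĉ` taking values
in `[-1/2, 1/2)`, and `β := α - c f` has `β̂ = x f`, i.e. `β̂(g) = m x(g) - Σ aₛ x(gs⁻¹)`. Since
`Σ aₛ = m`, both terms lie in `[-m/2, m/2)`, so `-m < β̂(g) < m`; in particular `β̂` never takes
the value `-m`.
-/

open Filter Topology Set MonoidAlgebra

section Convolution

variable {G : Type*} [Group G]

def rightConv (ξ : G → ℝ) (f : MonoidAlgebra ℤ G) (g : G) : ℝ :=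
  f.coeff.sum fun h n => ξ (g * h⁻¹) * n

def leftConv (α : MonoidAlgebra ℤ G) (ξ : G → ℝ) (g : G) : ℝ :=
  α.coeff.sum fun h n => n * ξ (h⁻¹ * g)

theorem rightConv_eq_tsum (ξ : G → ℝ) (f : MonoidAlgebra ℤ G) (g : G) :
    rightConv ξ f g = ∑' h, ξ (g * h⁻¹) * f.coeff h :=
  (tsum_eq_sum fun h hh => by simp [Finsupp.notMem_support_iff.mp hh]).symm

theorem rightConv_single (ξ : G → ℝ) (h : G) (n : ℤ) (g : G) :
    rightConv ξ (single h n) g = ξ (g * h⁻¹) * n :=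
  Finsupp.sum_single_index (by simp)

theorem rightConv_add (ξ : G → ℝ) (f₁ f₂ : MonoidAlgebra ℤ G) (g : G) :
    rightConv ξ (f₁ + f₂) g = rightConv ξ f₁ g + rightConv ξ f₂ g :=
  Finsupp.sum_add_index' (by simp) (by simp [mul_add])

theorem rightConv_sub (ξ : G → ℝ) (f₁ f₂ : MonoidAlgebra ℤ G) (g : G) :
    rightConv ξ (f₁ - f₂) g = rightConv ξ f₁ g - rightConv ξ f₂ g :=
  Finsupp.sum_sub_index (by simp [mul_sub])

theorem rightConv_sum {ι : Type*} (ξ : G → ℝ) (s : Finset ι) (f : ι → MonoidAlgebra ℤ G)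
    (g : G) : rightConv ξ (∑ i ∈ s, f i) g = ∑ i ∈ s, rightConv ξ (f i) g := by
  simp only [rightConv, coeff_sum]
  exact (Finsupp.sum_finsetSum_index (by simp) (by simp [mul_add])).symm

theorem rightConv_sub_left (ξ η : G → ℝ) (f : MonoidAlgebra ℤ G) (g : G) :
    rightConv (ξ - η) f g = rightConv ξ f g - rightConv η f g := by
  simp [rightConv, Finsupp.sum, sub_mul]

theorem rightConv_coeff (c f : MonoidAlgebra ℤ G) (g : G) :
    rightConv (fun g => (c.coeff g : ℝ)) f g = (c * f).coeff g := by
  induction f using MonoidAlgebra.induction_linear with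
  | zero => simp [rightConv]
  | add f₁ f₂ h₁ h₂ => rw [rightConv_add, h₁, h₂, mul_add, coeff_add, Finsupp.add_apply,
      Int.cast_add]
  | single h n => rw [rightConv_single, coeff_mul_single_apply, Int.cast_mul]

theorem rightConv_leftConv (α : MonoidAlgebra ℤ G) (ξ : G → ℝ) (f : MonoidAlgebra ℤ G) :
    rightConv (leftConv α ξ) f = leftConv α (rightConv ξ f) := by
  ext g
  simp only [rightConv, leftConv, Finsupp.sum, Finset.sum_mul, Finset.mul_sum]
  rw [Finset.sum_comm]
  simp only [mul_assoc]

theorem leftConv_delta [DecidableEq G] (α : MonoidAlgebra ℤ G) :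
    leftConv α (fun g => if g = 1 then 1 else 0) = fun g => (α.coeff g : ℝ) := by
  ext g
  simp only [leftConv, inv_mul_eq_one, mul_ite, mul_one, mul_zero, Finsupp.sum]
  rw [Finset.sum_ite_eq']
  split_ifs with hg
  · rfl
  · simp [Finsupp.notMem_support_iff.mp hg]

theorem tendsto_leftConv (α : MonoidAlgebra ℤ G) {ξ : G → ℝ}
    (hξ : Tendsto ξ cofinite (𝓝 0)) : Tendsto (leftConv α ξ) cofinite (𝓝 0) := by
  have := tendsto_finsetSum α.coeff.support fun h _ =>
    ((hξ.comp (mul_right_injective h⁻¹).tendsto_cofinite).const_mul (α.coeff h : ℝ))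
  simp only [mul_zero, Finset.sum_const_zero] at this
  exact this

end Convolution

theorem tendsto_cofinite_zero_of_finite_le_abs {X : Type*} {ξ : X → ℝ}
    (h : ∀ ε : ℝ, 0 < ε → {x | ε ≤ |ξ x|}.Finite) : Tendsto ξ cofinite (𝓝 0) := by
  refine Metric.tendsto_nhds.mpr fun ε hε => eventually_cofinite.mpr ?_
  simpa [Real.dist_eq] using h ε hε

theorem exists_finsupp_sub_mem_Ico {X : Type*} {y : X → ℝ} (hy : Tendsto y cofinite (𝓝 0)) :
    ∃ c : X →₀ ℤ, ∀ x, y x - c x ∈ Ico (-(1 / 2)) (1 / 2) := by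
  have hfin : (Function.support fun x => round (y x)).Finite := by
    have := (Metric.tendsto_nhds.mp hy) (1 / 2) (by norm_num)
    refine (eventually_cofinite.mp this).subset fun x hx => ?_
    contrapose! hx
    rw [Function.notMem_support, round_eq_zero_iff]
    simp only [mem_ofPred_eq, Real.dist_eq, sub_zero] at hx
    exact ⟨by linarith [neg_abs_le (y x)], by linarith [le_abs_self (y x)]⟩
  refine ⟨Finsupp.ofSupportFinite _ hfin, fun x => ?_⟩
  rw [Finsupp.ofSupportFinite_coe]
  exact ⟨by linarith [round_le_add_half (y x)], by linarith [sub_half_lt_round (y x)]⟩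

theorem sum_mul_mem_Ico {ι : Type*} {s : Finset ι} (hs : s.Nonempty) {t w : ι → ℝ}
    (ht : ∀ i ∈ s, t i ∈ Ico (-(1 / 2)) (1 / 2)) (hw : ∀ i ∈ s, 0 < w i) :
    ∑ i ∈ s, t i * w i ∈ Ico (-(∑ i ∈ s, w i) / 2) ((∑ i ∈ s, w i) / 2) := by
  constructor
  · rw [neg_div, Finset.sum_div, ← Finset.sum_neg_distrib]
    exact Finset.sum_le_sum fun i hi => by nlinarith [hw i hi, (ht i hi).1]
  · rw [Finset.sum_div]
    exact Finset.sum_lt_sum_of_nonempty hs fun i hi => by nlinarith [hw i hi, (ht i hi).2]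

theorem rightConv_lopsided_mem_Ioo {G : Type*} [Group G] {S : Finset G} (hS : S.Nonempty)
    {a : G → ℤ} (ha : ∀ s ∈ S, 0 < a s) {x : G → ℝ} (hx : ∀ g, x g ∈ Ico (-(1 / 2)) (1 / 2))
    (g : G) :
    rightConv x (single 1 (∑ s ∈ S, a s) - ∑ s ∈ S, single s (a s)) g ∈
      Ioo (-(∑ s ∈ S, a s : ℝ)) (∑ s ∈ S, a s) := by
  simp only [rightConv_sub, rightConv_sum, rightConv_single, inv_one, mul_one]
  obtain ⟨hsum_lo, hsum_hi⟩ := sum_mul_mem_Ico hS (fun s _ => hx (g * s⁻¹))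
    (w := fun s => (a s : ℝ)) fun s hs => by exact_mod_cast ha s hs
  have hm : (0 : ℝ) < ∑ s ∈ S, a s := by exact_mod_cast Finset.sum_pos ha hS
  obtain ⟨hx_lo, hx_hi⟩ := hx g
  push_cast
  constructor <;> nlinarith

theorem semi_lopsided_coefficient_reduction_general
    {G : Type*} [Group G] [DecidableEq G]
    (S : Finset G)
    (a : G → ℤ) (ha : ∀ s ∈ S, 0 < a s)
    (m : ℤ) (hm1 : 1 ≤ m) (hmsum : m = ∑ s ∈ S, a s)
    (f : MonoidAlgebra ℤ G)
    (hf : f = MonoidAlgebra.single (1 : G) m - ∑ s ∈ S, MonoidAlgebra.single s (a s))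
    (ξ : G → ℝ)
    (hc0 : ∀ ε : ℝ, 0 < ε → {g : G | ε ≤ |ξ g|}.Finite)
    (hinv : ∀ g : G, (∑' h : G, ξ (g * h⁻¹) * ((f.coeff h : ℤ) : ℝ)) =
      (if g = 1 then (1 : ℝ) else 0)) :
    ∀ α : MonoidAlgebra ℤ G, ∃ β c : MonoidAlgebra ℤ G,
      α = β + c * f ∧
      (∀ g : G, -m ≤ β.coeff g ∧ β.coeff g ≤ m - 1) ∧
      (∀ g : G, β.coeff g = -m → ∀ s ∈ S, β.coeff (g * s⁻¹) < 0) := by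
  intro α
  have hS : S.Nonempty := Finset.nonempty_of_sum_ne_zero (by omega : ∑ s ∈ S, a s ≠ 0)
  obtain ⟨c, hc⟩ := exists_finsupp_sub_mem_Ico
    (tendsto_leftConv α (tendsto_cofinite_zero_of_finite_le_abs hc0))
  have hα : rightConv (leftConv α ξ) f = fun g => (α.coeff g : ℝ) := by
    rw [rightConv_leftConv, ← leftConv_delta]
    exact congrArg _ (funext fun g => (rightConv_eq_tsum ξ f g).trans (hinv g))
  set β := α - ofCoeff c * f
  have hβ (g : G) : -m < β.coeff g ∧ β.coeff g < m := by
    have hβR : (β.coeff g : ℝ) ∈ Ioo (-(m : ℝ)) m := by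
      -- `β̂ = α̂ - ĉ f = (αξ) f - ĉ f = (αξ - ĉ) f`
      rw [coeff_sub, Finsupp.sub_apply, Int.cast_sub, ← rightConv_coeff, ← congrFun hα g,
        ← rightConv_sub_left, hmsum, Int.cast_sum]
      exact hf ▸ hmsum ▸ rightConv_lopsided_mem_Ioo hS ha hc g
    exact ⟨by exact_mod_cast hβR.1, by exact_mod_cast hβR.2⟩
  exact ⟨β, ofCoeff c, (sub_add_cancel _ _).symm,
    fun g => ⟨(hβ g).1.le, Int.le_sub_one_of_lt (hβ g).2⟩, fun g hg => absurd hg (hβ g).1.ne'⟩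

/-- let `f = m − Σ_{s∈S} aₛ s ∈ ℤ[G]` be semi-lopsided with `1 ∉ S`,
`aₛ > 0` and `Σₛ aₛ = m ≥ 1`, and suppose `ξ ∈ c₀(G, ℝ)` is a `c₀` formal right
inverse of `f` (`ξ * f = δ₁`). Then every `α ∈ ℤ[G]` can be written `α = β + c·f`
with `β̂(g) ∈ {−m, …, m−1}` for all `g`, and moreover `β, c` may be chosen so that
whenever `β̂(g) = −m` one has `β̂(gs⁻¹) < 0` for all `s ∈ S`. -/
theorem semi_lopsided_coefficient_reduction
    {G : Type*} [Group G] [Countable G] [DecidableEq G]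
    (S : Finset G) (hS : (1 : G) ∉ S)
    (a : G → ℤ) (ha : ∀ s ∈ S, 0 < a s)
    (m : ℤ) (hm1 : 1 ≤ m) (hmsum : m = ∑ s ∈ S, a s)
    (f : MonoidAlgebra ℤ G)
    (hf : f = MonoidAlgebra.single (1 : G) m - ∑ s ∈ S, MonoidAlgebra.single s (a s))
    (ξ : G → ℝ)
    (hc0 : ∀ ε : ℝ, 0 < ε → {g : G | ε ≤ |ξ g|}.Finite)
    (hinv : ∀ g : G, (∑' h : G, ξ (g * h⁻¹) * ((f.coeff h : ℤ) : ℝ)) =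
      (if g = 1 then (1 : ℝ) else 0)) :
    ∀ α : MonoidAlgebra ℤ G, ∃ β c : MonoidAlgebra ℤ G,
      α = β + c * f ∧
      (∀ g : G, -m ≤ β.coeff g ∧ β.coeff g ≤ m - 1) ∧
      (∀ g : G, β.coeff g = -m → ∀ s ∈ S, β.coeff (g * s⁻¹) < 0) :=
  semi_lopsided_coefficient_reduction_general S a ha m hm1 hmsum f hf ξ hc0 hinv
end

section
/- Let G be a countable group and assume f ∈ ℤ[G] is semi-lopsided with m = f̂(1) and m > Σ_{g≠1} f̂(g) (strict inequality with the actual, signed coefficients), and f has a c₀ formal right inverse. Then every α ∈ ℤ[G] can be written as α = β + c·f with β, c ∈ ℤ[G] and ‖β̂‖_∞ ≤ m − 1. -/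
/-- let `f ∈ ℤ[G]` be semi-lopsided with `m = f̂(1) > 0`,
`Σ_{g≠1} |f̂(g)| ≤ m`, and with the strict inequality `Σ_{g≠1} f̂(g) < m` of the
actual signed coefficients, and suppose `f` has a `c₀` formal right inverse. Then
every `α ∈ ℤ[G]` can be written `α = β + c·f` with `‖β̂‖_∞ ≤ m − 1`. -/
theorem semi_lopsided_strict_coefficient_reduction
    {G : Type*} [Group G] [Countable G] [DecidableEq G]
    (f : MonoidAlgebra ℤ G) (m : ℤ)
    (hm : m = f.coeff 1) (hmpos : 0 < m)
    (hsemi : (∑ g ∈ f.coeff.support.erase 1, |f.coeff g|) ≤ m)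
    (hstrict : (∑ g ∈ f.coeff.support.erase 1, f.coeff g) < m)
    (ξ : G → ℝ)
    (hc0 : ∀ ε : ℝ, 0 < ε → {g : G | ε ≤ |ξ g|}.Finite)
    (hinv : ∀ g : G, (∑' h : G, ξ (g * h⁻¹) * ((f.coeff h : ℤ) : ℝ)) =
      (if g = 1 then (1 : ℝ) else 0)) :
    ∀ α : MonoidAlgebra ℤ G, ∃ β c : MonoidAlgebra ℤ G,
      α = β + c * f ∧ ∀ g : G, |β.coeff g| ≤ m - 1 := by
  classical
  intro α
  by_cases hα : α = 0
  · refine ⟨0, 0, by simp [hα], fun g => by simp; omega⟩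
  -- the real-valued convolution α ⋆ ξ
  set r : G → ℝ := fun g => ∑ k ∈ α.coeff.support, (α.coeff k : ℝ) * ξ (k⁻¹ * g) with hrdef
  -- the formal inverse identity restricted to finite sums
  have h1 : ∀ u : G, (∑ h ∈ f.coeff.support, ξ (u * h⁻¹) * (f.coeff h : ℝ)) =
      if u = 1 then (1 : ℝ) else 0 := by
    intro u
    rw [← hinv u]
    exact (tsum_eq_sum (fun h hh => by
      simp [Finsupp.notMem_support_iff.mp hh])).symm
  -- the key identity: (α ⋆ ξ) ⋆ f = α
  have key : ∀ g : G, (∑ h ∈ f.coeff.support, r (g * h⁻¹) * (f.coeff h : ℝ)) = (α.coeff g : ℝ) := by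
    intro g
    have e0 : (∑ h ∈ f.coeff.support, r (g * h⁻¹) * (f.coeff h : ℝ)) =
        ∑ h ∈ f.coeff.support, ∑ k ∈ α.coeff.support,
          (α.coeff k : ℝ) * (ξ ((k⁻¹ * g) * h⁻¹) * (f.coeff h : ℝ)) := by
      refine Finset.sum_congr rfl fun h _ => ?_
      rw [hrdef, Finset.sum_mul]
      refine Finset.sum_congr rfl fun k _ => ?_
      rw [mul_assoc, mul_assoc]
    rw [e0, Finset.sum_comm]
    simp only [← Finset.mul_sum]
    have : ∀ k ∈ α.coeff.support, (α.coeff k : ℝ) *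
        (∑ h ∈ f.coeff.support, ξ ((k⁻¹ * g) * h⁻¹) * (f.coeff h : ℝ)) =
        if k = g then (α.coeff k : ℝ) else 0 := by
      intro k _
      rw [h1 (k⁻¹ * g)]
      by_cases hk : k = g <;> simp [hk, inv_mul_eq_one, eq_comm]
    rw [Finset.sum_congr rfl this, Finset.sum_ite_eq' α.coeff.support g (fun k => (α.coeff k : ℝ))]
    by_cases hg : g ∈ α.coeff.support
    · simp [hg]
    · simp [hg, Finsupp.notMem_support_iff.mp hg]
  -- the integer-valued rounding of r
  set cf : G → ℤ := fun g => round (r g) with hcfdef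
  -- finiteness of the support of cf
  have hn : 0 < α.coeff.support.card := Finset.card_pos.mpr (Finsupp.support_nonempty_iff.mpr (by simpa using hα))
  set M : ℤ := ∑ k ∈ α.coeff.support, |α.coeff k| with hMdef
  have hM : 0 < M := by
    refine Finset.sum_pos (fun k hk => abs_pos.mpr (Finsupp.mem_support_iff.mp hk)) ?_
    exact Finsupp.support_nonempty_iff.mpr (by simpa using hα)
  set ε : ℝ := 1 / (2 * α.coeff.support.card * M) with hεdef
  have hεpos : 0 < ε := by
    apply div_pos one_pos
    positivity
  have hfin : (Function.support cf).Finite := by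
    have hsub : Function.support cf ⊆
        ⋃ k ∈ (α.coeff.support : Set G), (fun h => k * h) '' {h : G | ε ≤ |ξ h|} := by
      intro g hg
      have hr2 : 1 / 2 ≤ |r g| := by
        by_contra hcon
        push_neg at hcon
        apply hg
        simp only [hcfdef]
        rw [round_eq_zero_iff]
        constructor
        · nlinarith [abs_lt.mp hcon]
        · nlinarith [abs_lt.mp hcon]
      -- some term must be at least ε in ξ
      have hex : ∃ k ∈ α.coeff.support, ε ≤ |ξ (k⁻¹ * g)| := by
        by_contra hcon
        push_neg at hcon
        have hb : |r g| ≤ ∑ k ∈ α.coeff.support, |(α.coeff k : ℝ)| * |ξ (k⁻¹ * g)| := by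
          refine (Finset.abs_sum_le_sum_abs _ _).trans ?_
          refine le_of_eq (Finset.sum_congr rfl fun k _ => ?_)
          rw [abs_mul]
        have hlt : ∑ k ∈ α.coeff.support, |(α.coeff k : ℝ)| * |ξ (k⁻¹ * g)| <
            ∑ k ∈ α.coeff.support, |(α.coeff k : ℝ)| * ε := by
          refine Finset.sum_lt_sum_of_nonempty (Finsupp.support_nonempty_iff.mpr (by simpa using hα))
            fun k hk => ?_
          have h1 : (0 : ℝ) < |(α.coeff k : ℝ)| := by
            rw [abs_pos]
            exact_mod_cast Finsupp.mem_support_iff.mp hk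
          exact (mul_lt_mul_iff_right₀ h1).mpr (hcon k hk)
        have hMeq : ∑ k ∈ α.coeff.support, |(α.coeff k : ℝ)| * ε = (M : ℝ) * ε := by
          rw [← Finset.sum_mul, hMdef]
          push_cast
          rw [Finset.sum_congr rfl (fun k _ => rfl)]
        have hMε : (M : ℝ) * ε ≤ 1 / 2 := by
          rw [hεdef]
          rw [mul_one_div, div_le_div_iff₀ (by positivity) (by norm_num)]
          have h1 : (1 : ℝ) ≤ (α.coeff.support.card : ℝ) := by exact_mod_cast hn
          have h2 : (1 : ℝ) ≤ (M : ℝ) := by exact_mod_cast hM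
          nlinarith
        linarith [hb, hlt, hMeq ▸ hlt]
      obtain ⟨k, hk, hkε⟩ := hex
      refine Set.mem_biUnion hk ⟨k⁻¹ * g, hkε, by group⟩
    exact Set.Finite.subset
      (Set.Finite.biUnion (α.coeff.support : Set G).toFinite
        (fun k _ => ((hc0 ε hεpos).image _)))
      hsub
  -- define c and β
  set c : MonoidAlgebra ℤ G := MonoidAlgebra.ofCoeff (Finsupp.ofSupportFinite cf hfin) with hcdef
  have hc : ∀ u : G, c.coeff u = cf u := fun u => congrFun Finsupp.ofSupportFinite_coe u
  refine ⟨α - c * f, c, by abel, fun g => ?_⟩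
  -- the fractional part
  set x : G → ℝ := fun u => r u - (cf u : ℝ) with hxdef
  have hxlo : ∀ u : G, -(1 / 2 : ℝ) ≤ x u := by
    intro u
    have := Int.floor_le (r u + 1 / 2)
    simp only [hxdef, hcfdef, round_eq]
    linarith
  have hxhi : ∀ u : G, x u < 1 / 2 := by
    intro u
    have := Int.lt_floor_add_one (r u + 1 / 2)
    simp only [hxdef, hcfdef, round_eq]
    linarith
  have hxabs : ∀ u : G, |x u| ≤ 1 / 2 := fun u => abs_le.mpr ⟨hxlo u, (hxhi u).le⟩
  -- coefficient formula for β
  have hβ : ((α - c * f).coeff g : ℤ) = α.coeff g - ∑ h ∈ f.coeff.support, cf (g * h⁻¹) * f.coeff h := by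
    rw [MonoidAlgebra.coeff_sub, Finsupp.sub_apply, MonoidAlgebra.coeff_mul_apply_right, Finsupp.sum]
    simp only [hc]
  have hone : (1 : G) ∈ f.coeff.support := by
    rw [Finsupp.mem_support_iff]
    omega
  have hβr : (((α - c * f).coeff g : ℤ) : ℝ) = x g * (m : ℝ) +
      ∑ h ∈ f.coeff.support.erase 1, x (g * h⁻¹) * (f.coeff h : ℝ) := by
    have e1 : (((α - c * f).coeff g : ℤ) : ℝ) =
        ∑ h ∈ f.coeff.support, x (g * h⁻¹) * (f.coeff h : ℝ) := by
      rw [hβ]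
      push_cast
      rw [← key g]
      rw [← Finset.sum_sub_distrib]
      exact Finset.sum_congr rfl fun h _ => by rw [hxdef]; ring
    rw [e1, ← Finset.add_sum_erase _ _ hone]
    congr 1
    rw [inv_one, mul_one, hm]
  -- upper bound
  have hub : (((α - c * f).coeff g : ℤ) : ℝ) < (m : ℝ) := by
    rw [hβr]
    have h1 : x g * (m : ℝ) < 1 / 2 * (m : ℝ) := by
      have : (0 : ℝ) < (m : ℝ) := by exact_mod_cast hmpos
      exact mul_lt_mul_of_pos_right (hxhi g) this
    have h2 : (∑ h ∈ f.coeff.support.erase 1, x (g * h⁻¹) * (f.coeff h : ℝ)) ≤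
        ∑ h ∈ f.coeff.support.erase 1, 1 / 2 * |(f.coeff h : ℝ)| := by
      refine Finset.sum_le_sum fun h _ => ?_
      calc x (g * h⁻¹) * (f.coeff h : ℝ) ≤ |x (g * h⁻¹) * (f.coeff h : ℝ)| := le_abs_self _
        _ = |x (g * h⁻¹)| * |(f.coeff h : ℝ)| := abs_mul _ _
        _ ≤ 1 / 2 * |(f.coeff h : ℝ)| := by
            exact mul_le_mul_of_nonneg_right (hxabs _) (abs_nonneg _)
    have h3 : (∑ h ∈ f.coeff.support.erase 1, 1 / 2 * |(f.coeff h : ℝ)|) ≤ 1 / 2 * (m : ℝ) := by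
      rw [← Finset.mul_sum]
      have : (∑ h ∈ f.coeff.support.erase 1, |(f.coeff h : ℝ)|) ≤ (m : ℝ) := by
        exact_mod_cast hsemi
      linarith
    linarith
  -- lower bound
  have hlb : -(m : ℝ) < (((α - c * f).coeff g : ℤ) : ℝ) := by
    rw [hβr]
    have h1 : -(1 / 2) * (m : ℝ) ≤ x g * (m : ℝ) := by
      have : (0 : ℝ) < (m : ℝ) := by exact_mod_cast hmpos
      exact mul_le_mul_of_nonneg_right (hxlo g) this.le
    by_cases hA : ∀ h ∈ f.coeff.support.erase 1, 0 ≤ f.coeff h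
    · -- all nonnegative: use the strict signed sum hypothesis
      have h2 : (∑ h ∈ f.coeff.support.erase 1, -(1 / 2) * (f.coeff h : ℝ)) ≤
          ∑ h ∈ f.coeff.support.erase 1, x (g * h⁻¹) * (f.coeff h : ℝ) := by
        refine Finset.sum_le_sum fun h hh => ?_
        have hfh : (0 : ℝ) ≤ (f.coeff h : ℝ) := by exact_mod_cast hA h hh
        exact mul_le_mul_of_nonneg_right (hxlo (g * h⁻¹)) hfh
      have h3 : (∑ h ∈ f.coeff.support.erase 1, (f.coeff h : ℝ)) < (m : ℝ) := by
        exact_mod_cast hstrict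
      have h4 : (∑ h ∈ f.coeff.support.erase 1, -(1 / 2) * (f.coeff h : ℝ)) =
          -(1 / 2) * ∑ h ∈ f.coeff.support.erase 1, (f.coeff h : ℝ) := by
        rw [Finset.mul_sum]
      nlinarith
    · -- some negative coefficient: strict inequality at that coefficient
      push_neg at hA
      obtain ⟨s₀, hs₀, hs₀neg⟩ := hA
      have h2 : (∑ h ∈ f.coeff.support.erase 1, -(1 / 2) * |(f.coeff h : ℝ)|) <
          ∑ h ∈ f.coeff.support.erase 1, x (g * h⁻¹) * (f.coeff h : ℝ) := by
        refine Finset.sum_lt_sum (fun h _ => ?_) ⟨s₀, hs₀, ?_⟩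
        · have := hxabs (g * h⁻¹)
          have habs : |x (g * h⁻¹) * (f.coeff h : ℝ)| ≤ 1 / 2 * |(f.coeff h : ℝ)| := by
            rw [abs_mul]
            exact mul_le_mul_of_nonneg_right this (abs_nonneg _)
          have := neg_abs_le (x (g * h⁻¹) * (f.coeff h : ℝ))
          linarith
        · have hneg : ((f.coeff s₀ : ℤ) : ℝ) < 0 := by exact_mod_cast hs₀neg
          have habs : |(f.coeff s₀ : ℝ)| = -(f.coeff s₀ : ℝ) := abs_of_neg hneg
          have := hxhi (g * s₀⁻¹)
          nlinarith
      have h3 : (∑ h ∈ f.coeff.support.erase 1, |(f.coeff h : ℝ)|) ≤ (m : ℝ) := by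
        exact_mod_cast hsemi
      have h4 : (∑ h ∈ f.coeff.support.erase 1, -(1 / 2) * |(f.coeff h : ℝ)|) =
          -(1 / 2) * ∑ h ∈ f.coeff.support.erase 1, |(f.coeff h : ℝ)| := by
        rw [Finset.mul_sum]
      nlinarith
  -- conclude
  have : |(α - c * f).coeff g| < m := by
    rw [abs_lt]
    constructor <;> [exact_mod_cast hlb; exact_mod_cast hub]
  omega
end

section
/- Let (M, τ) be a tracial von Neumann algebra and x ∈ M with ‖x‖ ≤ 1. If 1 − Re(x) has an L² formal inverse, then so does 1 − x. In particular, if xξ = ξ for some ξ ∈ L²(M,τ) then x*ξ = ξ and Re(x)ξ = ξ, so injectivity of 1 − Re(x) implies injectivity of 1 − x. -/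
/-!
For `t > 0` put `y = 1 - x + t`. Its real part `A = (1 - Re x) + t` is invertible, and with
`w = A^{1/2}` the operator `w y⁻¹ w` is a contraction, because its inverse `w⁻¹ y w⁻¹` has real
part `1`. Writing `y⁻¹ = w⁻¹ (w y⁻¹ w) w⁻¹` and using the trace,
`‖y⁻¹ Ω‖₂ ≤ ‖A⁻¹ Ω‖₂ ≤ 2 ‖η‖` where `(1 - Re x) η = Ω`. So `(1 - x) ξ + t ξ = Ω` has solutions
bounded uniformly in `t`, and letting `t → 0` (Hahn–Banach and Riesz) gives `(1 - x) ξ = Ω`.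

The second part: if `x ξ = ξ` then `‖x* ξ - ξ‖² = ‖x* ξ‖² - ‖ξ‖² ≤ 0`.
-/

open scoped InnerProductSpace

open ComplexStarModule ContinuousLinearMap RCLike
open scoped Ring

theorem Commute.ringInverse_left {M₀ : Type*} [MonoidWithZero M₀] {a b : M₀} (h : Commute a b) :
    Commute a⁻¹ʳ b := by
  by_cases ha : IsUnit a
  · lift a to M₀ˣ using ha
    simpa using h.units_inv_left
  · simp [Ring.inverse_non_unit a ha]

namespace VonNeumannAlgebra

variable {H : Type*} [NormedAddCommGroup H] [InnerProductSpace ℂ H] [CompleteSpace H]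
  {S : VonNeumannAlgebra H} {a : H →L[ℂ] H}

theorem mem_of_forall_commute (h : ∀ b ∈ S.commutant, Commute a b) : a ∈ S := by
  rw [← S.commutant_commutant, mem_commutant_iff]
  exact fun b hb ↦ (h b hb).eq.symm

theorem commute_of_mem_commutant (ha : a ∈ S) {b : H →L[ℂ] H} (hb : b ∈ S.commutant) :
    Commute a b :=
  mem_commutant_iff.mp hb a ha

theorem ringInverse_mem (ha : a ∈ S) : a⁻¹ʳ ∈ S :=
  mem_of_forall_commute fun _ hb ↦ (commute_of_mem_commutant ha hb).ringInverse_left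

theorem sqrt_mem (ha : a ∈ S) : CFC.sqrt a ∈ S :=
  mem_of_forall_commute fun _ hb ↦ by
    rw [CFC.sqrt_eq_cfc]
    exact (commute_of_mem_commutant ha hb).cfc_nnreal _

theorem algebraMap_mem (t : ℝ) : algebraMap ℝ (H →L[ℂ] H) t ∈ S :=
  mem_of_forall_commute fun b _ ↦ Algebra.commute_algebraMap_left t b

theorem realPart_mem (ha : a ∈ S) : (ℜ a : H →L[ℂ] H) ∈ S := by
  rw [realPart_apply_coe, ← Complex.coe_smul]
  exact S.toStarSubalgebra.smul_mem (add_mem ha (star_mem ha)) _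

end VonNeumannAlgebra

theorem isUnit_one_sub_add_algebraMap {A : Type*} [NormedRing A] [NormedAlgebra ℝ A]
    [CompleteSpace A] {x : A} (hx : ‖x‖ ≤ 1) {t : ℝ} (ht : 0 < t) :
    IsUnit (1 - x + algebraMap ℝ A t) := by
  have hc : 1 + t ≠ 0 := by positivity
  have : 1 - x + algebraMap ℝ A t = algebraMap ℝ A (1 + t) * (1 - (1 + t)⁻¹ • x) := by
    rw [mul_sub, mul_one, ← Algebra.smul_def, smul_smul, mul_inv_cancel₀ hc, one_smul, map_add,
      map_one]
    abel
  rw [this]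
  refine ((isUnit_iff_ne_zero.mpr hc).map _).mul (isUnit_one_sub_of_norm_lt_one ?_)
  rw [norm_smul, Real.norm_of_nonneg (by positivity)]
  calc (1 + t)⁻¹ * ‖x‖ ≤ (1 + t)⁻¹ := mul_le_of_le_one_right (by positivity) hx
    _ < 1 := inv_lt_one_of_one_lt₀ (by linarith)

theorem mul_norm_le_norm_of_mul_sq_le_re_inner {𝕜 E : Type*} [RCLike 𝕜] [NormedAddCommGroup E]
    [InnerProductSpace 𝕜 E] {c : ℝ} {u v : E}
    (h : c * ‖u‖ ^ 2 ≤ re ⟪v, u⟫_𝕜) : c * ‖u‖ ≤ ‖v‖ := by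
  rcases (norm_nonneg u).eq_or_lt with hu | hu
  · rw [← hu, mul_zero]
    exact norm_nonneg v
  · have := h.trans ((re_le_norm _).trans (norm_inner_le_norm v u))
    nlinarith

namespace ContinuousLinearMap

section RCLike

variable {𝕜 E F : Type*} [RCLike 𝕜] [NormedAddCommGroup E] [InnerProductSpace 𝕜 E]
  [CompleteSpace E] [NormedAddCommGroup F] [InnerProductSpace 𝕜 F] [CompleteSpace F]

theorem adjoint_apply_eq_self_of_apply_eq_self {x : E →L[𝕜] E} (hx : ‖x‖ ≤ 1) {ξ : E}
    (h : x ξ = ξ) : adjoint x ξ = ξ := by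
  have hinner : ⟪adjoint x ξ, ξ⟫_𝕜 = ‖ξ‖ ^ 2 := by
    rw [adjoint_inner_left, h, inner_self_eq_norm_sq_to_K]
  have hle : ‖adjoint x ξ‖ ≤ ‖ξ‖ := by
    simpa using (adjoint x).le_of_opNorm_le ((adjoint.norm_map x).trans_le hx) ξ
  have : ‖adjoint x ξ - ξ‖ ^ 2 ≤ 0 := by
    rw [@norm_sub_sq 𝕜, hinner]
    norm_cast
    nlinarith [norm_nonneg (adjoint x ξ)]
  rw [← sub_eq_zero, ← norm_eq_zero, ← sq_eq_zero_iff]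
  exact le_antisymm this (sq_nonneg _)

theorem exists_apply_eq_of_norm_inner_le (S : E →L[𝕜] F) {Ω : F} {C : ℝ}
    (h : ∀ v, ‖⟪Ω, v⟫_𝕜‖ ≤ C * ‖adjoint S v‖) : ∃ ξ, S ξ = Ω := by
  -- `adjoint S v ↦ ⟪Ω, v⟫` is a well-defined bounded functional on the range of `adjoint S`;
  -- extend it by Hahn–Banach and represent the extension by a vector (Riesz).
  set R := (adjoint S : F →ₗ[𝕜] E).range
  have hker : (adjoint S : F →ₗ[𝕜] E).ker ≤ (innerSL 𝕜 Ω : F →ₗ[𝕜] 𝕜).ker := fun v hv ↦ by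
    have hv : adjoint S v = 0 := hv
    exact norm_le_zero_iff.mp (by simpa [hv] using h v)
  set f : R →ₗ[𝕜] 𝕜 := (Submodule.liftQ _ _ hker).comp
    ((adjoint S : F →ₗ[𝕜] E).quotKerEquivRange.symm : R →ₗ[𝕜] _)
  have hf : ∀ v, f ⟨adjoint S v, v, rfl⟩ = ⟪Ω, v⟫_𝕜 := fun v ↦
    (congrArg (Submodule.liftQ _ _ hker)
      (LinearMap.quotKerEquivRange_symm_apply_image _ v ⟨v, rfl⟩)).trans rfl
  obtain ⟨g, hg, -⟩ := exists_extension_norm_eq R (f.mkContinuous C fun ⟨_, v, rfl⟩ ↦ by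
    simpa [hf] using h v)
  refine ⟨(InnerProductSpace.toDual 𝕜 E).symm g, ext_inner_right 𝕜 fun v ↦ ?_⟩
  rw [← adjoint_inner_right, InnerProductSpace.toDual_symm_apply]
  exact (hg ⟨adjoint S v, v, rfl⟩).trans (hf v)

theorem exists_apply_eq_of_forall_add_smul (S : E →L[𝕜] E) {Ω : E} {C : ℝ}
    (h : ∀ t : ℝ, 0 < t → ∃ ξ, ‖ξ‖ ≤ C ∧ S ξ + (t : 𝕜) • ξ = Ω) : ∃ ξ, S ξ = Ω := by
  refine exists_apply_eq_of_norm_inner_le S (C := C) fun v ↦ ?_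
  have hbound : ∀ t : ℝ, 0 < t → ‖⟪Ω, v⟫_𝕜‖ ≤ C * ‖adjoint S v‖ + t * (C * ‖v‖) := by
    intro t ht
    obtain ⟨ξ, hξ, rfl⟩ := h t ht
    rw [inner_add_left, inner_smul_left, ← adjoint_inner_right]
    calc _ ≤ ‖⟪ξ, adjoint S v⟫_𝕜‖ + t * ‖⟪ξ, v⟫_𝕜‖ := by
          refine (norm_add_le _ _).trans_eq ?_
          rw [norm_mul, conj_ofReal, norm_ofReal, abs_of_pos ht]
      _ ≤ C * ‖adjoint S v‖ + t * (C * ‖v‖) := by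
          gcongr <;> refine (norm_inner_le_norm _ _).trans ?_ <;> gcongr
  refine ge_of_tendsto (x := nhdsWithin (0 : ℝ) (Set.Ioi 0)) ?_
    (eventually_nhdsWithin_of_forall hbound)
  have : Continuous fun t : ℝ ↦ C * ‖adjoint S v‖ + t * (C * ‖v‖) := by fun_prop
  simpa using (this.tendsto 0).mono_left nhdsWithin_le_nhds

end RCLike

section Complex

variable {H : Type*} [NormedAddCommGroup H] [InnerProductSpace ℂ H] [CompleteSpace H]

theorem re_inner_realPart_apply (y : H →L[ℂ] H) (u : H) :
    re ⟪(ℜ y : H →L[ℂ] H) u, u⟫_ℂ = re ⟪y u, u⟫_ℂ := by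
  rw [realPart_apply_coe, smul_apply, ← Complex.coe_smul, inner_smul_left, add_apply,
    inner_add_left, star_eq_adjoint, adjoint_inner_left, ← inner_conj_symm u (y u), add_conj]
  simp

theorem realPart_one_sub_nonneg {x : H →L[ℂ] H} (hx : ‖x‖ ≤ 1) :
    0 ≤ (ℜ (1 - x) : H →L[ℂ] H) := by
  refine (nonneg_iff_isPositive _).mpr (isPositive_def'.mpr ⟨(ℜ (1 - x)).prop, fun u ↦ ?_⟩)
  have hxu : re ⟪x u, u⟫_ℂ ≤ ‖u‖ ^ 2 :=
    calc re ⟪x u, u⟫_ℂ ≤ ‖x u‖ * ‖u‖ := (re_le_norm _).trans (norm_inner_le_norm _ _)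
      _ ≤ ‖u‖ ^ 2 := by
        rw [sq]
        gcongr
        simpa using x.le_of_opNorm_le hx u
  rw [reApplyInnerSelf_apply, re_inner_realPart_apply, sub_apply, one_apply_eq_self,
    inner_sub_left, map_sub, inner_self_eq_norm_sq]
  linarith

theorem norm_sqrt_realPart_mul_ringInverse_mul_le_one {y : H →L[ℂ] H} (hy : IsUnit y)
    (hA : IsStrictlyPositive (ℜ y : H →L[ℂ] H)) :
    ‖CFC.sqrt (ℜ y : H →L[ℂ] H) * y⁻¹ʳ * CFC.sqrt (ℜ y : H →L[ℂ] H)‖ ≤ 1 := by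
  set w := CFC.sqrt (ℜ y : H →L[ℂ] H)
  have hw : IsSelfAdjoint w := (CFC.sqrt_nonneg _).isSelfAdjoint
  have hwb : w * w⁻¹ʳ = 1 := Ring.mul_inverse_cancel w (hA.isUnit_cfcSqrt _)
  have hbw : w⁻¹ʳ * w = 1 := Ring.inverse_mul_cancel w (hA.isUnit_cfcSqrt _)
  have hinv : w⁻¹ʳ * y * w⁻¹ʳ * (w * y⁻¹ʳ * w) = 1 := by
    simp only [mul_assoc]
    rw [← mul_assoc w⁻¹ʳ w, hbw, one_mul, ← mul_assoc y, Ring.mul_inverse_cancel y hy, one_mul,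
      hbw]
  have hre : ∀ u, re ⟪(w⁻¹ʳ * y * w⁻¹ʳ) u, u⟫_ℂ = ‖u‖ ^ 2 := fun u ↦
    calc re ⟪w⁻¹ʳ (y (w⁻¹ʳ u)), u⟫_ℂ = re ⟪y (w⁻¹ʳ u), w⁻¹ʳ u⟫_ℂ :=
          congrArg re (hw.ringInverse.isSymmetric _ _)
      _ = re ⟪w (w (w⁻¹ʳ u)), w⁻¹ʳ u⟫_ℂ := by
          rw [← re_inner_realPart_apply, ← CFC.sqrt_mul_sqrt_self _ hA.nonneg]
          rfl
      _ = re ⟪w (w⁻¹ʳ u), w (w⁻¹ʳ u)⟫_ℂ := congrArg re (hw.isSymmetric _ _)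
      _ = ‖u‖ ^ 2 := by
          rw [← mul_apply_eq_comp, hwb, one_apply_eq_self, inner_self_eq_norm_sq]
  refine opNorm_le_bound _ zero_le_one fun p ↦ ?_
  have hp : (w⁻¹ʳ * y * w⁻¹ʳ) ((w * y⁻¹ʳ * w) p) = p := by
    rw [← mul_apply_eq_comp, hinv, one_apply_eq_self]
  have := mul_norm_le_norm_of_mul_sq_le_re_inner
    ((one_mul _).trans_le (hre ((w * y⁻¹ʳ * w) p)).ge)
  simpa only [hp, one_mul] using this

theorem norm_ringInverse_add_algebraMap_apply_le {P : H →L[ℂ] H} (hP : 0 ≤ P) {t : ℝ}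
    (ht : 0 < t) (η : H) : ‖(P + algebraMap ℝ _ t)⁻¹ʳ (P η)‖ ≤ 2 * ‖η‖ := by
  set Q := P + algebraMap ℝ _ t
  have hQ : IsUnit Q := (IsStrictlyPositive.nonneg_add hP (isStrictlyPositive_algebraMap ht)).isUnit
  set u := Q⁻¹ʳ η
  have hQu : Q u = η := by rw [← mul_apply_eq_comp, Ring.mul_inverse_cancel Q hQ, one_apply_eq_self]
  have hPη : Q⁻¹ʳ (P η) = η - t • u := by
    have : P η = Q η - t • η := by simp [Q]
    rw [this, map_sub, map_smul_of_tower, ← mul_apply_eq_comp, Ring.inverse_mul_cancel Q hQ,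
      one_apply_eq_self]
  have htu : t * ‖u‖ ≤ ‖η‖ := by
    rw [← hQu]
    refine mul_norm_le_norm_of_mul_sq_le_re_inner (𝕜 := ℂ) ?_
    have := ((nonneg_iff_isPositive P).mp hP).re_inner_nonneg_left u
    rw [add_apply, inner_add_left, map_add, algebraMap_apply, real_smul_eq_coe_smul (K := ℂ) t u,
      inner_smul_real_left, smul_re, inner_self_eq_norm_sq]
    linarith
  calc ‖Q⁻¹ʳ (P η)‖ ≤ ‖η‖ + t * ‖u‖ := by
        rw [hPη]
        refine (norm_sub_le _ _).trans_eq ?_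
        rw [norm_smul, Real.norm_of_nonneg ht.le]
    _ ≤ 2 * ‖η‖ := by linarith

end Complex

end ContinuousLinearMap

namespace TracialVonNeumannAlgebra

variable {H : Type*} [NormedAddCommGroup H] [InnerProductSpace ℂ H] [CompleteSpace H]
  (T : TracialVonNeumannAlgebra H)

theorem τ_mul_comm {a b : H →L[ℂ] H} (ha : a ∈ T.M) (hb : b ∈ T.M) :
    T.τ (a * b) = T.τ (b * a) :=
  T.tracial a b ha hb

theorem norm_apply_Ω_sq (a : H →L[ℂ] H) : ‖a T.Ω‖ ^ 2 = re (T.τ (star a * a)) := by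
  rw [τ, mul_apply_eq_comp, star_eq_adjoint, adjoint_inner_left, inner_self_eq_norm_sq]

theorem norm_star_apply_Ω {a : H →L[ℂ] H} (ha : a ∈ T.M) : ‖star a T.Ω‖ = ‖a T.Ω‖ := by
  rw [← sq_eq_sq₀ (norm_nonneg _) (norm_nonneg _), norm_apply_Ω_sq, norm_apply_Ω_sq, star_star,
    T.τ_mul_comm ha (star_mem ha)]

theorem norm_conj_apply_Ω_le {b v : H →L[ℂ] H} (hb : b ∈ T.M) (hbs : IsSelfAdjoint b)
    (hv : v ∈ T.M) (hvn : ‖v‖ ≤ 1) : ‖(b * v * b) T.Ω‖ ≤ ‖(b * b) T.Ω‖ := by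
  set c := b * b
  have hc : c ∈ T.M := mul_mem hb hb
  have hcs : IsSelfAdjoint c := by simpa only [sq] using hbs.pow 2
  have hcvΩ : ‖c (v T.Ω)‖ ≤ ‖c T.Ω‖ :=
    calc ‖c (v T.Ω)‖ = ‖star (c * v) T.Ω‖ := (T.norm_star_apply_Ω (mul_mem hc hv)).symm
      _ = ‖star v (c T.Ω)‖ := by rw [star_mul, hcs.star_eq]; rfl
      _ ≤ ‖c T.Ω‖ := by simpa using (star v).le_of_opNorm_le ((norm_star v).trans_le hvn) _
  rw [← sq_le_sq₀ (norm_nonneg _) (norm_nonneg _), norm_apply_Ω_sq]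
  calc re (T.τ (star (b * v * b) * (b * v * b))) = re (T.τ (star v * (c * v * c))) := by
        have : star (b * v * b) * (b * v * b) = b * (star v * c * v * b) := by
          simp only [star_mul, hbs.star_eq, c, mul_assoc]
        rw [this, T.τ_mul_comm hb (mul_mem (mul_mem (mul_mem (star_mem hv) hc) hv) hb)]
        simp only [c, mul_assoc]
    _ = re ⟪v (c T.Ω), c (v T.Ω)⟫_ℂ := by
        rw [τ, mul_apply_eq_comp, star_eq_adjoint, adjoint_inner_left, mul_apply_eq_comp,
          mul_apply_eq_comp]
        exact congrArg re (hcs.isSymmetric _ _)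
    _ ≤ ‖c T.Ω‖ * ‖c T.Ω‖ := by
        refine (re_le_norm _).trans ((norm_inner_le_norm _ _).trans ?_)
        gcongr
        simpa using v.le_of_opNorm_le hvn (c T.Ω)
    _ = ‖c T.Ω‖ ^ 2 := (sq _).symm

theorem norm_ringInverse_apply_Ω_le {y : H →L[ℂ] H} (hy : y ∈ T.M) (hyu : IsUnit y)
    (hA : IsStrictlyPositive (ℜ y : H →L[ℂ] H)) :
    ‖y⁻¹ʳ T.Ω‖ ≤ ‖(ℜ y : H →L[ℂ] H)⁻¹ʳ T.Ω‖ := by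
  set w := CFC.sqrt (ℜ y : H →L[ℂ] H)
  have hw : w ∈ T.M := VonNeumannAlgebra.sqrt_mem (VonNeumannAlgebra.realPart_mem hy)
  have hwu : IsUnit w := hA.isUnit_cfcSqrt _
  have hy' : y⁻¹ʳ = w⁻¹ʳ * (w * y⁻¹ʳ * w) * w⁻¹ʳ := by
    simp only [mul_assoc]
    rw [← mul_assoc w⁻¹ʳ w, Ring.inverse_mul_cancel _ hwu, one_mul, Ring.mul_inverse_cancel _ hwu,
      mul_one]
  have hA' : (ℜ y : H →L[ℂ] H)⁻¹ʳ = w⁻¹ʳ * w⁻¹ʳ := by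
    rw [← CFC.sqrt_mul_sqrt_self _ hA.nonneg, Ring.mul_inverse_rev' (Commute.refl w)]
  rw [hy', hA']
  exact T.norm_conj_apply_Ω_le (VonNeumannAlgebra.ringInverse_mem hw)
    (CFC.sqrt_nonneg _).isSelfAdjoint.ringInverse
    (mul_mem (mul_mem hw (VonNeumannAlgebra.ringInverse_mem hy)) hw)
    (norm_sqrt_realPart_mul_ringInverse_mul_le_one hyu hA)

theorem norm_ringInverse_add_algebraMap_apply_Ω_le {a : H →L[ℂ] H} (ha : a ∈ T.M)
    (hre : 0 ≤ (ℜ a : H →L[ℂ] H)) {t : ℝ} (ht : 0 < t) (hu : IsUnit (a + algebraMap ℝ _ t))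
    {η : H} (hη : (ℜ a : H →L[ℂ] H) η = T.Ω) :
    ‖(a + algebraMap ℝ _ t)⁻¹ʳ T.Ω‖ ≤ 2 * ‖η‖ := by
  have hre' : (ℜ (a + algebraMap ℝ _ t) : H →L[ℂ] H) = ℜ a + algebraMap ℝ _ t := by
    rw [map_add, AddSubgroup.coe_add,
      ((IsSelfAdjoint.all t).algebraMap (H →L[ℂ] H)).coe_realPart]
  calc _ ≤ ‖(ℜ a + algebraMap ℝ (H →L[ℂ] H) t)⁻¹ʳ T.Ω‖ := by
        rw [← hre']
        refine T.norm_ringInverse_apply_Ω_le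
          (add_mem ha (VonNeumannAlgebra.algebraMap_mem t)) hu ?_
        rw [hre']
        exact IsStrictlyPositive.nonneg_add hre (isStrictlyPositive_algebraMap ht)
    _ ≤ 2 * ‖η‖ := by
        rw [← hη]
        exact norm_ringInverse_add_algebraMap_apply_le hre ht η

end TracialVonNeumannAlgebra

/-- for a contraction `x` in a tracial von Neumann algebra, if
`1 − Re(x)` has an `L²` formal inverse then so does `1 − x`; in particular any
`ξ` with `xξ = ξ` also satisfies `x*ξ = ξ` and `Re(x)ξ = ξ`. -/
theorem formal_inverse_of_real_part_formal_inverse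
    {H : Type*} [NormedAddCommGroup H] [InnerProductSpace ℂ H] [CompleteSpace H]
    (T : TracialVonNeumannAlgebra H)
    (x : H →L[ℂ] H) (hx : x ∈ T.M) (hnorm : ‖x‖ ≤ 1) :
    ((∃ ξ : H, ((1 : H →L[ℂ] H) -
        (2 : ℂ)⁻¹ • (x + ContinuousLinearMap.adjoint x)) ξ = T.Ω) →
      ∃ ξ : H, ((1 : H →L[ℂ] H) - x) ξ = T.Ω) ∧
    (∀ ξ : H, x ξ = ξ → (ContinuousLinearMap.adjoint x) ξ = ξ ∧
      ((2 : ℂ)⁻¹ • (x + ContinuousLinearMap.adjoint x)) ξ = ξ) := by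
  have hRe : (2 : ℂ)⁻¹ • (x + adjoint x) = (ℜ x : H →L[ℂ] H) := by
    rw [realPart_apply_coe, star_eq_adjoint, ← Complex.coe_smul]
    norm_num
  refine ⟨fun ⟨η, hη⟩ ↦ ?_, fun ξ hξ ↦ ?_⟩
  · have hη' : (ℜ (1 - x) : H →L[ℂ] H) η = T.Ω := by
      rwa [map_sub, AddSubgroup.coe_sub, (IsSelfAdjoint.one (R := H →L[ℂ] H)).coe_realPart,
        ← hRe]
    refine exists_apply_eq_of_forall_add_smul (1 - x) (C := 2 * ‖η‖) fun t ht ↦ ?_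
    have hu := isUnit_one_sub_add_algebraMap hnorm ht
    refine ⟨_, T.norm_ringInverse_add_algebraMap_apply_Ω_le (sub_mem (one_mem _) hx)
      (realPart_one_sub_nonneg hnorm) ht hu hη', ?_⟩
    rw [← real_smul_eq_coe_smul (K := ℂ), ← algebraMap_apply (R := ℂ) (S := ℝ), ← add_apply,
      ← mul_apply_eq_comp, Ring.mul_inverse_cancel _ hu, one_apply_eq_self]
  · have hξ' := adjoint_apply_eq_self_of_apply_eq_self hnorm hξ
    refine ⟨hξ', ?_⟩
    rw [smul_apply, add_apply, hξ, hξ', ← two_smul ℂ ξ, smul_smul]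
    norm_num
end

section
/- Let H be an infinite group with no nontrivial finite normal subgroups, I a set, and K a group acting faithfully on I. Then the generalized wreath product H ≀_I K = H^{⊕I} ⋊ K has no nontrivial finite normal subgroups. -/
/-- The subgroup `H^{⊕I}` of `H^I` consisting of finitely supported functions. -/
def finSupportSubgroup (I : Type*) (H : Type*) [Group H] : Subgroup (I → H) where
  carrier := {x | (Function.mulSupport x).Finite}
  one_mem' := by
    simp [Function.mulSupport_one]
  mul_mem' := by
    intro a b ha hb
    exact Set.Finite.subset (ha.union hb) (Function.mulSupport_mul a b)
  inv_mem' := by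
    intro a ha
    simpa [Function.mulSupport_inv] using ha

/-- The action of `K` on `H^{⊕I}` by permuting coordinates, as a homomorphism
`K →* MulAut (H^{⊕I})`, defining the generalized wreath product `H ≀_I K`. -/
def wreathAction (I H K : Type*) [Group H] [Group K] [MulAction K I] :
    K →* MulAut ↥(finSupportSubgroup I H) where
  toFun k :=
    { toFun := fun x => ⟨fun i => x.1 (k⁻¹ • i), by
        show (Function.mulSupport (x.1 ∘ fun i => k⁻¹ • i)).Finite
        rw [Function.mulSupport_comp_eq_preimage x.1 fun i => k⁻¹ • i]
        exact Set.Finite.preimage (MulAction.injective (k⁻¹ : K)).injOn x.2⟩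
      invFun := fun x => ⟨fun i => x.1 (k • i), by
        show (Function.mulSupport (x.1 ∘ fun i => k • i)).Finite
        rw [Function.mulSupport_comp_eq_preimage x.1 fun i => k • i]
        exact Set.Finite.preimage (MulAction.injective k).injOn x.2⟩
      left_inv := by
        intro x
        apply Subtype.ext
        funext i
        simp
      right_inv := by
        intro x
        apply Subtype.ext
        funext i
        simp
      map_mul' := by
        intro x y
        rfl }
  map_one' := by
    apply MulEquiv.ext
    intro x
    apply Subtype.ext
    funext i
    simp
  map_mul' := by
    intro k₁ k₂
    apply MulEquiv.ext
    intro x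
    apply Subtype.ext
    funext i
    simp [mul_smul]

/-!
A finite normal subgroup `N` of `H ≀_I K` contains, with each `g = (x, k)`, all its conjugates by
the elements `δᵢ(a)` of the base supported at a single point `i`. If `k` moves `i`, the `i`-th
coordinate of that conjugate is `a * x i`, so `N` would be infinite along with `H`. Hence `k` fixes
`I` pointwise and `k = 1` by faithfulness, i.e. `N` lies in the base `H^{⊕I}`. There every
coordinate projection maps `N` onto a finite normal subgroup of `H`, which is trivial.
-/

def HasNoFiniteNormalSubgroups (G : Type*) [Group G] : Prop :=
  ∀ N : Subgroup G, N.Normal → (N : Set G).Finite → N = ⊥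

abbrev WreathProduct (I H K : Type*) [Group H] [Group K] [MulAction K I] :=
  SemidirectProduct ↥(finSupportSubgroup I H) K (wreathAction I H K)

namespace finSupportSubgroup

variable {I H : Type*} [Group H]

def single [DecidableEq I] (i : I) : H →* finSupportSubgroup I H :=
  (MonoidHom.mulSingle (fun _ => H) i).codRestrict _ fun _ =>
    (Set.finite_singleton i).subset Pi.mulSupport_mulSingle_subset

def eval (i : I) : finSupportSubgroup I H →* H :=
  (Pi.evalMonoidHom (fun _ => H) i).comp (finSupportSubgroup I H).subtype

theorem eval_surjective (i : I) : Function.Surjective (eval (H := H) i) := by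
  classical
  exact fun a => ⟨single i a, Pi.mulSingle_eq_same (M := fun _ => H) i a⟩

end finSupportSubgroup

namespace HasNoFiniteNormalSubgroups

theorem eq_bot_of_le_range {A B : Type*} [Group A] [Group B] (hA : HasNoFiniteNormalSubgroups A)
    {f : A →* B} (hf : Function.Injective f) {M : Subgroup B} (hM : M.Normal)
    (hfin : (M : Set B).Finite) (hle : M ≤ f.range) : M = ⊥ := by
  have hbot : M.comap f = ⊥ := hA _ (hM.comap f) (hfin.preimage hf.injOn :)
  rw [← Subgroup.map_comap_eq_self hle, hbot, Subgroup.map_bot]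

theorem finSupportSubgroup {I H : Type*} [Group H] (hH : HasNoFiniteNormalSubgroups H) :
    HasNoFiniteNormalSubgroups (finSupportSubgroup I H) := by
  intro M hM hfin
  refine (Subgroup.eq_bot_iff_forall M).2 fun x hx => Subtype.ext (funext fun i => ?_)
  have hbot := hH _ (hM.map _ (finSupportSubgroup.eval_surjective i)) (hfin.image _)
  exact (Subgroup.eq_bot_iff_forall _).1 hbot _ ⟨x, hx, rfl⟩

end HasNoFiniteNormalSubgroups

namespace WreathProduct

open SemidirectProduct finSupportSubgroup

variable {I H K : Type*} [Group H] [Group K] [MulAction K I]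

theorem conj_inl_single_left_apply_self [DecidableEq I] (g : WreathProduct I H K) (i : I) (a : H)
    (hi : g.right⁻¹ • i ≠ i) :
    ((inl (single i a) * g * (inl (single i a))⁻¹ : WreathProduct I H K).left : I → H) i =
      a * (g.left : I → H) i := by
  have hleft : (inl (single i a) * g * (inl (single i a))⁻¹ : WreathProduct I H K).left =
      single i a * g.left * wreathAction I H K g.right (single i a)⁻¹ := by
    simp [mul_assoc]
  rw [hleft]
  show Pi.mulSingle (M := fun _ => H) i a i * _ *
    (Pi.mulSingle (M := fun _ => H) i a (g.right⁻¹ • i))⁻¹ = _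
  rw [Pi.mulSingle_eq_same, Pi.mulSingle_eq_of_ne hi, inv_one, mul_one]

theorem right_eq_one_of_mem [Infinite H] [FaithfulSMul K I] {N : Subgroup (WreathProduct I H K)}
    (hN : N.Normal) (hfin : (N : Set (WreathProduct I H K)).Finite) {g : WreathProduct I H K}
    (hg : g ∈ N) : g.right = 1 := by
  classical
  suffices h : ∀ i : I, g.right⁻¹ • i = i from
    inv_eq_one.1 (eq_of_smul_eq_smul fun i => by rw [h, one_smul])
  intro i
  by_contra hi
  refine (Set.infinite_range_of_injective (mul_left_injective ((g.left : I → H) i))).mono ?_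
    (hfin.image fun x => (x.left : I → H) i)
  rintro _ ⟨a, rfl⟩
  exact ⟨_, hN.conj_mem g hg (inl (single i a)), conj_inl_single_left_apply_self g i a hi⟩

end WreathProduct

/-- if `H` is an infinite group with no nontrivial finite normal
subgroups, `I` a set, and `K` a group acting faithfully on `I`, then the generalized
wreath product `H ≀_I K = H^{⊕I} ⋊ K` has no nontrivial finite normal subgroups. -/
theorem wreath_product_no_finite_normal_subgroups
    (I H K : Type*) [Group H] [Group K] [MulAction K I] [FaithfulSMul K I]
    [Infinite H]
    (hH : ∀ N : Subgroup H, N.Normal → (N : Set H).Finite → N = ⊥) :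
    ∀ N : Subgroup (SemidirectProduct ↥(finSupportSubgroup I H) K (wreathAction I H K)),
      N.Normal → (N : Set (SemidirectProduct ↥(finSupportSubgroup I H) K
        (wreathAction I H K))).Finite → N = ⊥ := by
  intro N hN hfin
  refine HasNoFiniteNormalSubgroups.eq_bot_of_le_range
    (HasNoFiniteNormalSubgroups.finSupportSubgroup hH) SemidirectProduct.inl_injective hN hfin ?_
  rw [SemidirectProduct.range_inl_eq_ker_rightHom]
  exact fun g hg => WreathProduct.right_eq_one_of_mem hN hfin hg
end
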